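/- Let δ = ±1, τ > 0, h⁺ > 0, h⁻ > 0, α ∈ ℝ and t ∈ ℝ with α + e^{δt} > 0 and α + e^{δ(t+τ)} > 0. Let f, f̂ ∈ ℝ satisfy f̂ = e^{δτ}f − (1/2)·e^{δτ}(e^{δτ} − 1)·e^{δt}/(α + e^{δt}). For x ∈ ℝ put x̂ = x·(α + e^{δ(t+τ)})/(α + e^{δt}) and Δx = x̂ − x, and define u = exp(f − δe^{δt}x²/(4(α + e^{δt}))), u₊ = exp(f − δe^{δt}(x+h⁺)²/(4(α + e^{δt}))), u₋ = exp(f − δe^{δt}(x−h⁻)²/(4(α + e^{δt}))), û = exp(f̂ − δe^{δ(t+τ)}x̂²/(4(α + e^{δ(t+τ)}))). Then both equations of the invariant difference model hold: (i) δΔx + 2(e^{δτ} − 1)·[ (h⁻/(h⁺+h⁻))·(ln u₊ − ln u)/h⁺ + (h⁺/(h⁺+h⁻))·(ln u − ln u₋)/h⁻ ] = 0, and (ii) δ(Δx)² + 4(1 − e^{−δτ})(ln û − e^{δτ}ln u) = (8/δ)·(e^{δτ} − 1)²/(h⁺+h⁻) · [ (ln u₊ − ln u)/h⁺ − (ln u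 − ln u₋)/h⁻ ]. -/
import Mathlib


open Real

/-- The invariant solution
`u = exp(f − δe^{δt}x²/(4(α+e^{δt})))` on the moving mesh
`x̂ = x(α+e^{δ(t+τ)})/(α+e^{δt})`, with `f` evolving by
`f̂ = e^{δτ}f − ½e^{δτ}(e^{δτ}−1)e^{δt}/(α+e^{δt})`, satisfies both equations of
the invariant difference model for the semilinear heat equation
`u_t = u_xx + δu ln u`. -/
theorem invariant_solution_of_semilinear_heat_scheme
    (del : ℝ) (hdel : del = 1 ∨ del = -1)
    (τ hp hm α t : ℝ) (hτ : 0 < τ) (hhp : 0 < hp) (hhm : 0 < hm)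
    (hα : 0 < α + Real.exp (del * t)) (hα' : 0 < α + Real.exp (del * (t + τ)))
    (f fh : ℝ)
    (hf : fh = Real.exp (del * τ) * f
      - (1 / 2) * Real.exp (del * τ) * (Real.exp (del * τ) - 1)
          * Real.exp (del * t) / (α + Real.exp (del * t)))
    (x xh Δx : ℝ)
    (hxh : xh = x * (α + Real.exp (del * (t + τ))) / (α + Real.exp (del * t)))
    (hΔx : Δx = xh - x)
    (u up um uh : ℝ)
    (hu : u = Real.exp (f - del * Real.exp (del * t) * x ^ 2
        / (4 * (α + Real.exp (del * t)))))
    (hup : up = Real.exp (f - del * Real.exp (del * t) * (x + hp) ^ 2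
        / (4 * (α + Real.exp (del * t)))))
    (hum : um = Real.exp (f - del * Real.exp (del * t) * (x - hm) ^ 2
        / (4 * (α + Real.exp (del * t)))))
    (huh : uh = Real.exp (fh - del * Real.exp (del * (t + τ)) * xh ^ 2
        / (4 * (α + Real.exp (del * (t + τ)))))) :
    (del * Δx + 2 * (Real.exp (del * τ) - 1)
        * ((hm / (hp + hm)) * ((Real.log up - Real.log u) / hp)
          + (hp / (hp + hm)) * ((Real.log u - Real.log um) / hm)) = 0) ∧
    (del * Δx ^ 2 + 4 * (1 - Real.exp (-(del * τ)))
        * (Real.log uh - Real.exp (del * τ) * Real.log u)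
      = (8 / del) * (Real.exp (del * τ) - 1) ^ 2 / (hp + hm)
          * ((Real.log up - Real.log u) / hp - (Real.log u - Real.log um) / hm)) := by
  have hmul : del * (t + τ) = del * t + del * τ := by ring
  rw [hmul, Real.exp_add] at hα' hxh huh
  have hEτ : Real.exp (-(del * τ)) = (Real.exp (del * τ))⁻¹ := by
    rw [Real.exp_neg]
  subst hu hup hum huh hΔx hxh hf
  rw [Real.log_exp, Real.log_exp, Real.log_exp, Real.log_exp, hEτ]
  set a := Real.exp (del * t) with ha
  set b := Real.exp (del * τ) with hb
  have hA : α + a ≠ 0 := ne_of_gt hα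
  have hA' : α + a * b ≠ 0 := ne_of_gt hα'
  have hb0 : b ≠ 0 := (Real.exp_pos _).ne'
  have hp0 : hp ≠ 0 := ne_of_gt hhp
  have hm0 : hm ≠ 0 := ne_of_gt hhm
  have hpm : hp + hm ≠ 0 := by positivity
  have hd0 : del ≠ 0 := by rcases hdel with h | h <;> simp [h]
  constructor
  · field_simp
    ring_nf
  · field_simp
    ring_nf
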